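/- Let μ ∈ ℝ, B > 0, C > 0, D ∈ ℝ, λ > 0, ℓ₀ ∈ ℝ, T > 0. The function u(t,ℓ) := exp(−(CD/B)(T−t)) · exp(−(Cλ/B)(ℓ−ℓ₀)(T−t)) · exp(−(Cλμ/(2B))(T−t)²) · exp((C²λ²/(3B))(T−t)³) is a classical solution on [0,T] × ℝ of the linear PDE u_t + μ u_ℓ + B u_{ℓℓ} − (CD/B) u − (λC/B)(ℓ−ℓ₀) u = 0 with terminal condition u(T,ℓ) = 1. -/

import Mathlib

/-!
Hopf–Cole: if `v` solves `v_t + μ v_ℓ + B v_ℓℓ - C v_ℓ² + f = 0`, then `u = exp (-(C/B) v)`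
solves the linear equation `u_t + μ u_ℓ + B u_ℓℓ - (C/B) f u = 0`, because the
`B k v_ℓ²` term produced by `u_ℓℓ` cancels `-C v_ℓ²` exactly when `k = -C/B`.
The value function of the ISO problem is an explicit polynomial, cubic in `T - t` and affine in `ℓ`,
and the given `u` is `exp (-(C/B) v)` for it.
-/

open Real

theorem hopfCole_residual {v : ℝ → ℝ → ℝ} {t ℓ : ℝ} (μ B k : ℝ)
    (ht : DifferentiableAt ℝ (fun s => v s ℓ) t) (hx : Differentiable ℝ (v t))
    (hxx : DifferentiableAt ℝ (deriv (v t)) ℓ) :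
    deriv (fun s => exp (k * v s ℓ)) t + μ * deriv (fun x => exp (k * v t x)) ℓ
        + B * deriv (deriv fun x => exp (k * v t x)) ℓ
      = k * (deriv (fun s => v s ℓ) t + μ * deriv (v t) ℓ + B * deriv (deriv (v t)) ℓ
          + B * k * deriv (v t) ℓ ^ 2) * exp (k * v t ℓ) := by
  have hux : ∀ x, HasDerivAt (fun x => exp (k * v t x)) (exp (k * v t x) * (k * deriv (v t) x)) x :=
    fun x => ((hx x).hasDerivAt.const_mul k).exp
  have hux' : deriv (fun x => exp (k * v t x))
      = fun x => exp (k * v t x) * (k * deriv (v t) x) :=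
    funext fun x => (hux x).deriv
  have huxx : HasDerivAt (fun x => exp (k * v t x) * (k * deriv (v t) x)) _ ℓ :=
    (hux ℓ).mul (hxx.hasDerivAt.const_mul k)
  rw [hux', huxx.deriv, (ht.hasDerivAt.const_mul k).exp.deriv]
  ring

/-- The value function `v` of the simplified ISO problem, with `λ` written `lam`. -/
noncomputable def isoValue (μ C D lam ℓ₀ T t ℓ : ℝ) : ℝ :=
  D * (T - t) + lam * (ℓ - ℓ₀) * (T - t) + lam * μ / 2 * (T - t) ^ 2
    - C * lam ^ 2 / 3 * (T - t) ^ 3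

section isoValue

variable (μ C D lam ℓ₀ T : ℝ)

theorem hasDerivAt_isoValue_time (t ℓ : ℝ) :
    HasDerivAt (fun s => isoValue μ C D lam ℓ₀ T s ℓ)
      (-(D + lam * (ℓ - ℓ₀) + lam * μ * (T - t) - C * lam ^ 2 * (T - t) ^ 2)) t := by
  have hτ : HasDerivAt (fun s : ℝ => T - s) (-1) t := (hasDerivAt_id t).const_sub T
  exact ((((hτ.const_mul D).add (hτ.const_mul (lam * (ℓ - ℓ₀)))).add
    ((hτ.pow 2).const_mul (lam * μ / 2))).sub ((hτ.pow 3).const_mul (C * lam ^ 2 / 3))).congr_deriv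
    (by norm_num; ring)

theorem hasDerivAt_isoValue_space (t ℓ : ℝ) :
    HasDerivAt (isoValue μ C D lam ℓ₀ T t) (lam * (T - t)) ℓ :=
  ((((hasDerivAt_id ℓ).sub_const ℓ₀).const_mul lam).mul_const (T - t)
    |>.const_add (D * (T - t)) |>.add_const (lam * μ / 2 * (T - t) ^ 2)
    |>.sub_const (C * lam ^ 2 / 3 * (T - t) ^ 3)).congr_deriv (by ring)

theorem deriv_isoValue_space (t : ℝ) :
    deriv (isoValue μ C D lam ℓ₀ T t) = fun _ => lam * (T - t) :=
  funext fun ℓ => (hasDerivAt_isoValue_space μ C D lam ℓ₀ T t ℓ).deriv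

theorem isoValue_hjb (B t ℓ : ℝ) :
    deriv (fun s => isoValue μ C D lam ℓ₀ T s ℓ) t + μ * deriv (isoValue μ C D lam ℓ₀ T t) ℓ
      + B * deriv (deriv (isoValue μ C D lam ℓ₀ T t)) ℓ
      - C * deriv (isoValue μ C D lam ℓ₀ T t) ℓ ^ 2 + D + lam * (ℓ - ℓ₀) = 0 := by
  rw [(hasDerivAt_isoValue_time μ C D lam ℓ₀ T t ℓ).deriv, deriv_isoValue_space, deriv_const]
  ring

end isoValue

theorem stmt_7_general (μ B C D lam ℓ₀ T : ℝ) (hB : 0 < B) :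
    let u : ℝ → ℝ → ℝ := fun t ℓ =>
      Real.exp (-(C * D / B) * (T - t)) * Real.exp (-(C * lam / B) * (ℓ - ℓ₀) * (T - t))
        * Real.exp (-(C * lam * μ / (2 * B)) * (T - t) ^ 2)
        * Real.exp (C ^ 2 * lam ^ 2 / (3 * B) * (T - t) ^ 3)
    (∀ t ∈ Set.Icc (0:ℝ) T, ∀ ℓ : ℝ,
      deriv (fun s => u s ℓ) t + μ * deriv (fun x => u t x) ℓ
        + B * deriv (deriv (fun x => u t x)) ℓ
        - C * D / B * u t ℓ - lam * C / B * (ℓ - ℓ₀) * u t ℓ = 0) ∧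
    (∀ ℓ : ℝ, u T ℓ = 1) := by
  intro u
  set v := isoValue μ C D lam ℓ₀ T
  have hu : u = fun t x => exp (-(C / B) * v t x) := by
    funext t x
    simp only [u, v, isoValue, ← Real.exp_add]
    congr 1
    ring
  refine ⟨fun t _ ℓ => ?_, fun ℓ => by simp [hu, v, isoValue]⟩
  have hv_space : Differentiable ℝ (v t) :=
    fun x => (hasDerivAt_isoValue_space μ C D lam ℓ₀ T t x).differentiableAt
  rw [hu, hopfCole_residual μ B (-(C / B))
    (hasDerivAt_isoValue_time μ C D lam ℓ₀ T t ℓ).differentiableAt hv_space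
    (by rw [deriv_isoValue_space]; exact differentiableAt_const _)]
  have hBk : B * -(C / B) = -C := by rw [mul_neg, mul_div_cancel₀ C hB.ne']
  linear_combination (-(C / B) * exp (-(C / B) * v t ℓ)) * isoValue_hjb μ C D lam ℓ₀ T B t ℓ
    + (-(C / B) * deriv (v t) ℓ ^ 2 * exp (-(C / B) * v t ℓ)) * hBk

/-- The Hopf–Cole transformed value function
`u(t,ℓ) = exp(-(CD/B)(T-t)) exp(-(Cλ/B)(ℓ-ℓ₀)(T-t)) exp(-(Cλμ/(2B))(T-t)²) exp((C²λ²/(3B))(T-t)³)`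
is a classical solution on `[0,T] × ℝ` of
`u_t + μ u_ℓ + B u_{ℓℓ} - (CD/B) u - (λC/B)(ℓ-ℓ₀) u = 0` with `u(T,·) = 1`. -/
theorem stmt_7 (μ B C D lam ℓ₀ T : ℝ) (hB : 0 < B) (hC : 0 < C) (hlam : 0 < lam)
    (hT : 0 < T) :
    let u : ℝ → ℝ → ℝ := fun t ℓ =>
      Real.exp (-(C * D / B) * (T - t)) * Real.exp (-(C * lam / B) * (ℓ - ℓ₀) * (T - t))
        * Real.exp (-(C * lam * μ / (2 * B)) * (T - t) ^ 2)
        * Real.exp (C ^ 2 * lam ^ 2 / (3 * B) * (T - t) ^ 3)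
    (∀ t ∈ Set.Icc (0:ℝ) T, ∀ ℓ : ℝ,
      deriv (fun s => u s ℓ) t + μ * deriv (fun x => u t x) ℓ
        + B * deriv (deriv (fun x => u t x)) ℓ
        - C * D / B * u t ℓ - lam * C / B * (ℓ - ℓ₀) * u t ℓ = 0) ∧
    (∀ ℓ : ℝ, u T ℓ = 1) :=
  stmt_7_general μ B C D lam ℓ₀ T hB
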